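/- arXiv:1410.1266 — 3 statements merged into one kernel-verified Lean document; each statement's English description precedes it below -/
import Mathlib

section
/- Suppose (q, p) maximizes R over the feasible set of Problem (P7). Then for every slot k ∈ {1,…,K} and every SC n ∈ N_k^E with h_{k,n} < max_{u∈N_k^E} h_{k,u}, one has q_{k,n} = 0. In particular, in every slot all wireless energy transfer power is placed on SCs of maximal gain within N_k^E, and if for slot k the maximum of h_{k,·} over N_k^E is attained at a unique SC m(k), then q_{k,n} = 0 for every n ∈ N_k^E with n ≠ m(k). -/
/-!
Problem (P7): one user harvests energy from an EAP over sub-channel sets `NE k`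
and transmits information over the complementary sets `NI k = {0,…,N} \ NE k`.
STATEMENT 0: at a maximizer, in every slot all WET power is placed on SCs of
maximal gain within `NE k`; i.e. `q k n = 0` whenever `h k n` is strictly below
the maximum of `h k` over `NE k`.
-/

noncomputable section

/-- Feasibility for Problem (P7). -/
def FeasibleP7 (K N : ℕ) (h : ℕ → ℕ → ℝ) (Q ζ B1 : ℝ)
    (NE : ℕ → Finset ℕ) (q p : ℕ → ℕ → ℝ) : Prop :=
  (∀ k ∈ Finset.Icc 1 K, ∀ n ∈ NE k, 0 ≤ q k n) ∧
  (∀ k ∈ Finset.Icc 1 K, ∀ n ∈ Finset.Icc 0 N \ NE k, 0 ≤ p k n) ∧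
  (∑ k ∈ Finset.Icc 1 K, ∑ n ∈ NE k, q k n ≤ (K : ℝ) * Q) ∧
  (∀ i ∈ Finset.Icc 1 K,
    ∑ k ∈ Finset.Icc 1 i, ∑ n ∈ Finset.Icc 0 N \ NE k, p k n ≤
      ζ * ∑ k ∈ Finset.Icc 1 (i - 1), ∑ n ∈ NE k, h k n * q k n + B1)

/-- Achievable rate for Problem (P7). -/
def RateP7 (K N : ℕ) (g : ℕ → ℕ → ℝ) (Γσ : ℝ)
    (NE : ℕ → Finset ℕ) (p : ℕ → ℕ → ℝ) : ℝ :=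
  (1 / ((K : ℝ) * N)) * ∑ k ∈ Finset.Icc 1 K, ∑ n ∈ Finset.Icc 0 N \ NE k,
    Real.logb 2 (1 + g k n * p k n / Γσ)

/-- Auxiliary: shifting an amount `c` from coordinate `n` to coordinate `m` in a
weighted sum. -/
lemma sum_shift_aux {s : Finset ℕ} {m n : ℕ} (hm : m ∈ s) (hn : n ∈ s)
    (f w : ℕ → ℝ) (c : ℝ) :
    ∑ j ∈ s, f j * (w j + (if j = m then c else 0) - (if j = n then c else 0))
      = (∑ j ∈ s, f j * w j) + (f m - f n) * c := by
  simp only [mul_add, mul_sub, mul_ite, mul_zero, Finset.sum_add_distrib,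
    Finset.sum_sub_distrib]
  rw [Finset.sum_ite_eq' s m (fun j => f j * c), Finset.sum_ite_eq' s n (fun j => f j * c),
    if_pos hm, if_pos hn]
  ring

/-- Auxiliary: adding an amount `c` at coordinate `j0` of a sum. -/
lemma sum_bump_aux {s : Finset ℕ} {j0 : ℕ} (hj : j0 ∈ s) (w : ℕ → ℝ) (c : ℝ) :
    ∑ j ∈ s, (w j + if j = j0 then c else 0) = (∑ j ∈ s, w j) + c := by
  rw [Finset.sum_add_distrib, Finset.sum_ite_eq' s j0 (fun _ => c), if_pos hj]

theorem stmt0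
    (K N : ℕ) (hK : 2 ≤ K) (hN : 2 ≤ N)
    (h g : ℕ → ℕ → ℝ)
    (hpos : ∀ k ∈ Finset.Icc 1 K, ∀ n ∈ Finset.Icc 1 N, 0 < h k n ∧ 0 < g k n)
    (hzero : ∀ k, h k 0 = 0 ∧ g k 0 = 0)
    (Q ζ B1 Γσ : ℝ) (hQ : 0 < Q) (hζ : 0 < ζ) (hB1 : 0 ≤ B1) (hΓσ : 0 < Γσ)
    (NE : ℕ → Finset ℕ) (hNEsub : ∀ k ∈ Finset.Icc 1 K, NE k ⊆ Finset.Icc 0 N)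
    (hNEK : NE K = {0})
    (q p : ℕ → ℕ → ℝ)
    (hfeas : FeasibleP7 K N h Q ζ B1 NE q p)
    (hopt : ∀ q' p', FeasibleP7 K N h Q ζ B1 NE q' p' →
      RateP7 K N g Γσ NE p' ≤ RateP7 K N g Γσ NE p) :
    ∀ k ∈ Finset.Icc 1 K, ∀ (n : ℕ) (hn : n ∈ NE k),
      h k n < (NE k).sup' ⟨n, hn⟩ (h k) → q k n = 0 := by
  classical
  intro k hk n hn hlt
  -- basic facts
  have hK1 : 1 ≤ K := le_trans (by norm_num) hK
  have hKmem : K ∈ Finset.Icc 1 K := Finset.mem_Icc.2 ⟨hK1, le_rfl⟩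
  have hN1 : 1 ≤ N := le_trans (by norm_num) hN
  have hNmem : N ∈ Finset.Icc 0 N \ NE K := by
    rw [hNEK]
    simp only [Finset.mem_sdiff, Finset.mem_Icc, Finset.mem_singleton]
    exact ⟨⟨Nat.zero_le _, le_rfl⟩, by omega⟩
  -- the maximizing subchannel m
  obtain ⟨m, hm, hms⟩ := Finset.exists_mem_eq_sup' ⟨n, hn⟩ (h k)
  have hmn : h k n < h k m := by rw [← hms]; exact hlt
  have hmnne : m ≠ n := by rintro rfl; exact lt_irrefl _ hmn
  -- k < K
  have hkK : k ≠ K := by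
    rintro rfl
    have hn0 : n = 0 := Finset.mem_singleton.1 (hNEK ▸ hn)
    have hm0 : m = 0 := Finset.mem_singleton.1 (hNEK ▸ hm)
    rw [hn0, hm0] at hmn
    exact lt_irrefl _ hmn
  have hkIcc := Finset.mem_Icc.1 hk
  have hkK1 : k ∈ Finset.Icc 1 (K - 1) :=
    Finset.mem_Icc.2 ⟨hkIcc.1, Nat.le_sub_one_of_lt (lt_of_le_of_ne hkIcc.2 hkK)⟩
  -- suppose q k n > 0
  by_contra hne
  have hqpos : 0 < q k n := (hfeas.1 k hk n hn).lt_of_ne (Ne.symm hne)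
  set d : ℝ := (h k m - h k n) * q k n with hd_def
  have hd : 0 < d := mul_pos (sub_pos.2 hmn) hqpos
  set δ : ℝ := ζ * d with hδ_def
  have hδ : 0 < δ := mul_pos hζ hd
  -- the perturbed point
  set q' : ℕ → ℕ → ℝ := fun i j =>
    q i j + (if i = k ∧ j = m then q k n else 0) - (if i = k ∧ j = n then q k n else 0)
    with hq'_def
  set p' : ℕ → ℕ → ℝ := fun i j =>
    p i j + (if i = K ∧ j = N then δ else 0) with hp'_def
  -- inner sum facts for q'
  have hq'row : ∀ k' : ℕ, ∀ f : ℕ → ℝ,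
      ∑ j ∈ NE k', f j * q' k' j
        = (∑ j ∈ NE k', f j * q k' j) + (if k' = k then (f m - f n) * q k n else 0) := by
    intro k' f
    by_cases hk' : k' = k
    · rw [if_pos hk']
      have hptw : ∀ j, q' k' j
          = q k' j + (if j = m then q k n else 0) - (if j = n then q k n else 0) := by
        intro j; simp [hq'_def, hk']
      rw [Finset.sum_congr rfl (fun j _ => by rw [hptw j]), hk']
      exact sum_shift_aux hm hn f _ _
    · rw [if_neg hk', add_zero]
      refine Finset.sum_congr rfl fun j _ => ?_
      have : q' k' j = q k' j := by simp [hq'_def, hk']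
      rw [this]
  -- energy sums
  have hE : ∀ t : ℕ,
      ∑ k' ∈ Finset.Icc 1 t, ∑ j ∈ NE k', h k' j * q' k' j
        = (∑ k' ∈ Finset.Icc 1 t, ∑ j ∈ NE k', h k' j * q k' j)
          + (if k ∈ Finset.Icc 1 t then d else 0) := by
    intro t
    have : ∀ k' ∈ Finset.Icc 1 t,
        ∑ j ∈ NE k', h k' j * q' k' j
          = (∑ j ∈ NE k', h k' j * q k' j) + (if k' = k then d else 0) := by
      intro k' _
      rw [hq'row k' (h k')]
      congr 1
      by_cases hk' : k' = k
      · rw [if_pos hk', if_pos hk', hk']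
      · rw [if_neg hk', if_neg hk']
    rw [Finset.sum_congr rfl this, Finset.sum_add_distrib,
      Finset.sum_ite_eq' (Finset.Icc 1 t) k (fun _ => d)]
  -- p sums
  have hP : ∀ i : ℕ,
      ∑ k' ∈ Finset.Icc 1 i, ∑ j ∈ Finset.Icc 0 N \ NE k', p' k' j
        = (∑ k' ∈ Finset.Icc 1 i, ∑ j ∈ Finset.Icc 0 N \ NE k', p k' j)
          + (if K ∈ Finset.Icc 1 i then δ else 0) := by
    intro i
    have : ∀ k' ∈ Finset.Icc 1 i,
        ∑ j ∈ Finset.Icc 0 N \ NE k', p' k' j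
          = (∑ j ∈ Finset.Icc 0 N \ NE k', p k' j) + (if k' = K then δ else 0) := by
      intro k' _
      by_cases hk' : k' = K
      · rw [if_pos hk']
        have hptw : ∀ j, p' k' j = p k' j + (if j = N then δ else 0) := by
          intro j; simp [hp'_def, hk']
        rw [Finset.sum_congr rfl (fun j _ => hptw j), hk', sum_bump_aux hNmem]
      · rw [if_neg hk', add_zero]
        refine Finset.sum_congr rfl fun j _ => ?_
        have : p' k' j = p k' j := by simp [hp'_def, hk']
        rw [this]
    rw [Finset.sum_congr rfl this, Finset.sum_add_distrib,
      Finset.sum_ite_eq' (Finset.Icc 1 i) K (fun _ => δ)]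
  -- feasibility of the new point
  have hfeas' : FeasibleP7 K N h Q ζ B1 NE q' p' := by
    refine ⟨?_, ?_, ?_, ?_⟩
    · intro i hi j hj
      have h1 : 0 ≤ q i j := hfeas.1 i hi j hj
      have hval : q' i j = q i j + (if i = k ∧ j = m then q k n else 0)
          - (if i = k ∧ j = n then q k n else 0) := by simp [hq'_def]
      rw [hval]
      by_cases hjn : i = k ∧ j = n
      · rw [if_neg (fun hc => hmnne (hc.2.symm.trans hjn.2)), if_pos hjn,
          hjn.1, hjn.2]
        simp
      · rw [if_neg hjn]
        have : (0:ℝ) ≤ if i = k ∧ j = m then q k n else 0 := by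
          split_ifs; exacts [hqpos.le, le_rfl]
        linarith
    · intro i hi j hj
      have h1 : 0 ≤ p i j := hfeas.2.1 i hi j hj
      have : (0:ℝ) ≤ if i = K ∧ j = N then δ else 0 := by positivity
      simp only [hp'_def]
      linarith
    · have htot : ∑ k' ∈ Finset.Icc 1 K, ∑ j ∈ NE k', q' k' j
          = ∑ k' ∈ Finset.Icc 1 K, ∑ j ∈ NE k', q k' j := by
        refine Finset.sum_congr rfl fun k' _ => ?_
        have := hq'row k' (fun _ => 1)
        simp only [one_mul] at this
        rw [this]
        split_ifs <;> ring
      rw [htot]; exact hfeas.2.2.1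
    · intro i hi
      have hcon := hfeas.2.2.2 i hi
      rw [hP i, hE (i - 1)]
      have key : (if K ∈ Finset.Icc 1 i then δ else 0)
          ≤ ζ * (if k ∈ Finset.Icc 1 (i - 1) then d else 0) := by
        by_cases hiK : K ∈ Finset.Icc 1 i
        · have hiK' : i = K :=
            le_antisymm (Finset.mem_Icc.1 hi).2 (Finset.mem_Icc.1 hiK).2
          subst hiK'
          rw [if_pos hiK, if_pos hkK1, hδ_def]
        · rw [if_neg hiK]
          split_ifs
          · positivity
          · simp
      rw [mul_add]
      linarith
  -- the rate strictly increases: contradiction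
  have hgKN : 0 < g K N := (hpos K hKmem N (Finset.mem_Icc.2 ⟨hN1, le_rfl⟩)).2
  have hpKN : 0 ≤ p K N := hfeas.2.1 K hKmem N hNmem
  have hx : (0:ℝ) < 1 + g K N * p K N / Γσ := by positivity
  set Δ : ℝ := Real.logb 2 (1 + g K N * (p K N + δ) / Γσ)
      - Real.logb 2 (1 + g K N * p K N / Γσ) with hΔ_def
  have hΔpos : 0 < Δ := by
    rw [hΔ_def]
    have hxy : 1 + g K N * p K N / Γσ < 1 + g K N * (p K N + δ) / Γσ := by
      gcongr
      nlinarith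
    linarith [Real.logb_lt_logb (by norm_num : (1:ℝ) < 2) hx hxy]
  -- rate decomposition
  have hR : RateP7 K N g Γσ NE p'
      = RateP7 K N g Γσ NE p + (1 / ((K : ℝ) * N)) * Δ := by
    have hinner : ∀ k' ∈ Finset.Icc 1 K,
        ∑ j ∈ Finset.Icc 0 N \ NE k', Real.logb 2 (1 + g k' j * p' k' j / Γσ)
          = (∑ j ∈ Finset.Icc 0 N \ NE k', Real.logb 2 (1 + g k' j * p k' j / Γσ))
            + (if k' = K then Δ else 0) := by
      intro k' _
      by_cases hk' : k' = K
      · subst hk'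
        rw [if_pos rfl]
        have hpt : ∀ j, Real.logb 2 (1 + g k' j * p' k' j / Γσ)
            = Real.logb 2 (1 + g k' j * p k' j / Γσ) + (if j = N then Δ else 0) := by
          intro j
          by_cases hj : j = N
          · subst hj
            rw [if_pos rfl, hΔ_def]
            have : p' k' j = p k' j + δ := by simp [hp'_def]
            rw [this]
            ring
          · rw [if_neg hj, add_zero]
            have : p' k' j = p k' j := by simp [hp'_def, hj]
            rw [this]
        rw [Finset.sum_congr rfl (fun j _ => hpt j), sum_bump_aux hNmem]
      · rw [if_neg hk', add_zero]
        refine Finset.sum_congr rfl fun j _ => ?_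
        have : p' k' j = p k' j := by simp [hp'_def, hk']
        rw [this]
    unfold RateP7
    rw [Finset.sum_congr rfl hinner, Finset.sum_add_distrib,
      Finset.sum_ite_eq' (Finset.Icc 1 K) K (fun _ => Δ), if_pos hKmem, mul_add]
  -- contradiction with optimality
  have hle := hopt q' p' hfeas'
  rw [hR] at hle
  have hKpos : (0:ℝ) < (K : ℝ) := by exact_mod_cast Nat.lt_of_lt_of_le Nat.zero_lt_two hK
  have hNpos : (0:ℝ) < (N : ℝ) := by exact_mod_cast Nat.lt_of_lt_of_le Nat.zero_lt_two hN
  have hc : (0:ℝ) < 1 / ((K : ℝ) * N) := by positivity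
  nlinarith [mul_pos hc hΔpos]

end
end

section
/- The optimal values of Problem (UB) and Problem (P-full) are equal; that is, allowing wireless energy transfer on all sub-channels simultaneously with wireless information transfer achieves no higher rate than restricting energy transfer to the single best sub-channel at each causally dominating slot. -/
/-!
A single-channel charging schedule of (P-full) is a schedule of (UB) that charges only on
SC `Π(k)`, so (P-full) is no better than (UB). Conversely, per unit of charging time slot `k`
harvests at most `h_{k,Π̃(k)}` on any SC, and the running maximum of `h_{j,Π̃(j)}` over `j ≤ k`
is attained at a slot `m(k) ≤ k` of `D̃` (a strict record, the best gains being distinct).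
Harvesting the energy of slot `k` at `m(k)` instead makes it available no later and costs no
more charging time, so energy causality and the time budget survive. The transmit powers are
untouched, hence the two problems have the same sets of achievable rates.
-/

open Finset

theorem nonneg_and_le_best_channel {N a : ℕ} {h : ℕ → ℝ} (ha : a ∈ Icc 1 N)
    (hpos : ∀ n ∈ Icc 1 N, 0 < h n) (h0 : h 0 = 0) (hmax : ∀ n ∈ Icc 1 N, n ≠ a → h n < h a) :
    ∀ n ∈ Icc 0 N, 0 ≤ h n ∧ h n ≤ h a := by
  intro n hn
  rcases Nat.eq_zero_or_pos n with rfl | hn0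
  · exact ⟨h0.ge, h0 ▸ (hpos a ha).le⟩
  · have hn' : n ∈ Icc 1 N := mem_Icc.2 ⟨hn0, (mem_Icc.1 hn).2⟩
    refine ⟨(hpos n hn').le, ?_⟩
    rcases eq_or_ne n a with rfl | hne
    · exact le_rfl
    · exact (hmax n hn' hne).le

theorem exists_dominating_record {L : ℕ} {f : ℕ → ℝ} (hf : Set.InjOn f (Icc 1 L))
    {D : Finset ℕ} (hD : ∀ k, k ∈ D ↔ k ∈ Icc 1 L ∧ ∀ j, 1 ≤ j → j < k → f j < f k) :
    ∃ m : ℕ → ℕ, ∀ k ∈ Icc 1 L, m k ∈ D ∧ m k ∈ Icc 1 k ∧ f k ≤ f (m k) := by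
  have hargmax : ∀ k, ∃ j, k ∈ Icc 1 L → j ∈ Icc 1 k ∧ ∀ i ∈ Icc 1 k, f i ≤ f j := fun k => by
    by_cases hk : k ∈ Icc 1 L
    · obtain ⟨j, hj, hmax⟩ :=
        exists_max_image (Icc 1 k) f ⟨k, mem_Icc.2 ⟨(mem_Icc.1 hk).1, le_rfl⟩⟩
      exact ⟨j, fun _ => ⟨hj, hmax⟩⟩
    · exact ⟨0, fun h => absurd h hk⟩
  choose m hm using hargmax
  refine ⟨m, fun k hk => ?_⟩
  obtain ⟨hmk, hmax⟩ := hm k hk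
  have hkL : Icc 1 k ⊆ Icc 1 L := Icc_subset_Icc_right (mem_Icc.1 hk).2
  refine ⟨(hD _).2 ⟨hkL hmk, fun j hj hjm => ?_⟩, hmk,
    hmax k (mem_Icc.2 ⟨(mem_Icc.1 hk).1, le_rfl⟩)⟩
  have hjk : j ∈ Icc 1 k := mem_Icc.2 ⟨hj, hjm.le.trans (mem_Icc.1 hmk).2⟩
  exact (hmax j hjk).lt_of_ne fun heq => hjm.ne (hf (hkL hjk) (hkL hmk) heq)

theorem exists_reallocation_to_records {L : ℕ} {D t : Finset ℕ} {m : ℕ → ℕ} {w E c : ℕ → ℝ}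
    (hm : ∀ k ∈ Icc 1 L, m k ∈ D ∧ m k ∈ Icc 1 k) (hDt : D ⊆ t) (hw : ∀ j ∈ D, 0 < w j)
    (hE : ∀ k ∈ Icc 1 L, 0 ≤ E k ∧ E k ≤ w (m k) * c k) :
    ∃ q : ℕ → ℝ, (∀ j, 0 ≤ q j ∧ (j ∉ D → q j = 0)) ∧
      ∑ j ∈ t, q j ≤ ∑ k ∈ Icc 1 L, c k ∧
      ∀ i ≤ L, ∑ k ∈ Icc 1 i, E k ≤ ∑ j ∈ Icc 1 i, w j * q j := by
  have hwm : ∀ k ∈ Icc 1 L, 0 < w (m k) := fun k hk => hw _ (hm k hk).1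
  have hfiber : ∀ j, w j * ∑ k ∈ Icc 1 L with m k = j, E k / w (m k) =
      ∑ k ∈ Icc 1 L with m k = j, E k := fun j => by
    rw [mul_sum]
    refine sum_congr rfl fun k hk => ?_
    obtain ⟨hkL, rfl⟩ := mem_filter.1 hk
    exact mul_div_cancel₀ _ (hwm k hkL).ne'
  -- the energy `E k` is harvested at `m k` instead, which takes time `E k / w (m k)`
  refine ⟨fun j => ∑ k ∈ Icc 1 L with m k = j, E k / w (m k), fun j => ⟨?_, fun hj => ?_⟩, ?_,
    fun i hi => ?_⟩
  · exact sum_nonneg fun k hk =>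
      div_nonneg (hE k (mem_filter.1 hk).1).1 (hwm k (mem_filter.1 hk).1).le
  · refine sum_eq_zero fun k hk => ?_
    obtain ⟨hkL, rfl⟩ := mem_filter.1 hk
    exact absurd (hm k hkL).1 hj
  · rw [sum_fiberwise_of_maps_to fun k hk => hDt (hm k hk).1]
    exact sum_le_sum fun k hk => (div_le_iff₀' (hwm k hk)).2 (hE k hk).2
  · simp only [hfiber]
    rw [sum_fiberwise_eq_sum_filter]
    refine sum_le_sum_of_subset_of_nonneg (fun k hk => ?_)
      fun k hk _ => (hE k (mem_filter.1 hk).1).1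
    have hk' := mem_Icc.1 hk
    have hmk := mem_Icc.1 (hm k (mem_Icc.2 ⟨hk'.1, hk'.2.trans hi⟩)).2
    exact mem_filter.2 ⟨mem_Icc.2 ⟨hk'.1, hk'.2.trans hi⟩, mem_Icc.2 ⟨hmk.1, hmk.2.trans hk'.2⟩⟩

theorem exists_record_charging_of_channel_charging {K N : ℕ} {D : Finset ℕ} {m : ℕ → ℕ}
    {w : ℕ → ℝ} {h q p : ℕ → ℕ → ℝ} {Qtot ζ B1 : ℝ} (hζ : 0 ≤ ζ) (hD : D ⊆ Icc 1 K)
    (hw : ∀ j ∈ D, 0 < w j)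
    (hm : ∀ k ∈ Icc 1 (K - 1), m k ∈ D ∧ m k ∈ Icc 1 k ∧ ∀ n ∈ Icc 0 N, h k n ≤ w (m k))
    (hh : ∀ k ∈ Icc 1 K, ∀ n ∈ Icc 0 N, 0 ≤ h k n) (hq : ∀ k ∈ Icc 1 K, ∀ n ∈ Icc 0 N, 0 ≤ q k n)
    (hbud : ∑ k ∈ Icc 1 K, ∑ n ∈ Icc 0 N, q k n ≤ Qtot)
    (hcaus : ∀ i ∈ Icc 1 K, ∑ k ∈ Icc 1 i, ∑ n ∈ Icc 0 N, p k n ≤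
      ζ * ∑ k ∈ Icc 1 (i - 1), ∑ n ∈ Icc 0 N, h k n * q k n + B1) :
    ∃ q' : ℕ → ℝ, (∀ k, 0 ≤ q' k ∧ (k ∉ D → q' k = 0)) ∧ ∑ k ∈ Icc 1 K, q' k ≤ Qtot ∧
      ∀ i ∈ Icc 1 K, ∑ k ∈ Icc 1 i, ∑ n ∈ Icc 0 N, p k n ≤
        ζ * ∑ k ∈ Icc 1 (i - 1), w k * q' k + B1 := by
  have hsub : Icc 1 (K - 1) ⊆ Icc 1 K := Icc_subset_Icc_right (Nat.sub_le K 1)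
  have hE : ∀ k ∈ Icc 1 (K - 1), 0 ≤ ∑ n ∈ Icc 0 N, h k n * q k n ∧
      ∑ n ∈ Icc 0 N, h k n * q k n ≤ w (m k) * ∑ n ∈ Icc 0 N, q k n := fun k hk =>
    ⟨sum_nonneg fun n hn => mul_nonneg (hh k (hsub hk) n hn) (hq k (hsub hk) n hn),
      mul_sum (Icc 0 N) _ (w (m k)) ▸ sum_le_sum fun n hn =>
        mul_le_mul_of_nonneg_right ((hm k hk).2.2 n hn) (hq k (hsub hk) n hn)⟩
  obtain ⟨q', hq', hbud', hcaus'⟩ :=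
    exists_reallocation_to_records (fun k hk => ⟨(hm k hk).1, (hm k hk).2.1⟩) hD hw hE
  refine ⟨q', hq', hbud'.trans ((sum_le_sum_of_subset_of_nonneg hsub fun k hk _ => ?_).trans
    hbud), fun i hi => (hcaus i hi).trans ?_⟩
  · exact sum_nonneg fun n hn => hq k hk n hn
  · gcongr ζ * ?_ + _
    exact hcaus' (i - 1) (by have := mem_Icc.1 hi; omega)

def singleChannel (Pi : ℕ → ℕ) (q : ℕ → ℝ) (k n : ℕ) : ℝ := if n = Pi k then q k else 0

theorem sum_mul_singleChannel {N : ℕ} {Pi : ℕ → ℕ} {k : ℕ} (hk : Pi k ≤ N) (a q : ℕ → ℝ) :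
    ∑ n ∈ Icc 0 N, a n * singleChannel Pi q k n = a (Pi k) * q k := by
  simp only [singleChannel, mul_ite, mul_zero]
  rw [sum_ite_eq', if_pos (mem_Icc.2 ⟨Nat.zero_le _, hk⟩)]

theorem sum_singleChannel {N : ℕ} {Pi : ℕ → ℕ} {k : ℕ} (hk : Pi k ≤ N) (q : ℕ → ℝ) :
    ∑ n ∈ Icc 0 N, singleChannel Pi q k n = q k := by
  simpa using sum_mul_singleChannel hk 1 q

theorem channel_charging_singleChannel {K N : ℕ} (hK : 1 ≤ K) {Pi : ℕ → ℕ} {q : ℕ → ℝ}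
    {h p : ℕ → ℕ → ℝ} {Qtot ζ B1 : ℝ} (hPi : ∀ k, Pi k ≤ N) (hPiK : Pi K = 0)
    (hq : ∀ k ∈ Icc 1 K, 0 ≤ q k ∧ (Pi k = 0 → q k = 0))
    (hbud : ∑ k ∈ Icc 1 K, q k ≤ Qtot)
    (hcaus : ∀ i ∈ Icc 1 K, ∑ k ∈ Icc 1 i, ∑ n ∈ Icc 0 N, p k n ≤
      ζ * ∑ k ∈ Icc 1 (i - 1), h k (Pi k) * q k + B1) :
    (∀ k ∈ Icc 1 K, ∀ n, 0 ≤ singleChannel Pi q k n) ∧ (∀ n, singleChannel Pi q K n = 0) ∧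
      ∑ k ∈ Icc 1 K, ∑ n ∈ Icc 0 N, singleChannel Pi q k n ≤ Qtot ∧
      ∀ i ∈ Icc 1 K, ∑ k ∈ Icc 1 i, ∑ n ∈ Icc 0 N, p k n ≤
        ζ * ∑ k ∈ Icc 1 (i - 1), ∑ n ∈ Icc 0 N, h k n * singleChannel Pi q k n + B1 := by
  refine ⟨fun k hk n => ?_, fun n => ?_, ?_, fun i hi => ?_⟩
  · unfold singleChannel; split_ifs <;> simp [(hq k hk).1]
  · unfold singleChannel; split_ifs <;> simp [(hq K (mem_Icc.2 ⟨hK, le_rfl⟩)).2 hPiK]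
  · simpa only [sum_singleChannel (hPi _)] using hbud
  · simpa only [sum_mul_singleChannel (hPi _)] using hcaus i hi

theorem stmt9_general
    (K N : ℕ) (hK : 2 ≤ K)
    (h g : ℕ → ℕ → ℝ)
    (hpos : ∀ k ∈ Finset.Icc 1 K, ∀ n ∈ Finset.Icc 1 N, 0 < h k n ∧ 0 < g k n)
    (hzero : ∀ k, h k 0 = 0 ∧ g k 0 = 0)
    (Q ζ B1 Γσ : ℝ) (hζ : 0 < ζ)
    (PiT : ℕ → ℕ)
    (hPiT : ∀ k ∈ Finset.Icc 1 K, PiT k ∈ Finset.Icc 1 N ∧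
      ∀ n ∈ Finset.Icc 1 N, n ≠ PiT k → h k n < h k (PiT k))
    (hdistT : ∀ k ∈ Finset.Icc 1 K, ∀ k' ∈ Finset.Icc 1 K, k ≠ k' →
      h k (PiT k) ≠ h k' (PiT k'))
    (DT : Finset ℕ)
    (hDT : ∀ k, k ∈ DT ↔ (k ∈ Finset.Icc 1 (K - 1) ∧
      ∀ j, 1 ≤ j → j < k → h j (PiT j) < h k (PiT k)))
    (Pi : ℕ → ℕ)
    (hPiDef : ∀ k, (k ∈ DT → Pi k = PiT k) ∧ (k ∉ DT → Pi k = 0)) :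
    sSup {r : ℝ | ∃ q p : ℕ → ℕ → ℝ,
        (∀ k ∈ Finset.Icc 1 K, ∀ n ∈ Finset.Icc 0 N, 0 ≤ q k n ∧ 0 ≤ p k n) ∧
        (∀ n, q K n = 0) ∧
        (∑ k ∈ Finset.Icc 1 K, ∑ n ∈ Finset.Icc 0 N, q k n ≤ (K : ℝ) * Q) ∧
        (∀ i ∈ Finset.Icc 1 K,
          ∑ k ∈ Finset.Icc 1 i, ∑ n ∈ Finset.Icc 0 N, p k n ≤
            ζ * ∑ k ∈ Finset.Icc 1 (i - 1), ∑ n ∈ Finset.Icc 0 N, h k n * q k n + B1) ∧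
        r = (1 / ((K : ℝ) * N)) * ∑ k ∈ Finset.Icc 1 K, ∑ n ∈ Finset.Icc 0 N,
              Real.logb 2 (1 + g k n * p k n / Γσ)}
    = sSup {r : ℝ | ∃ (q : ℕ → ℝ) (p : ℕ → ℕ → ℝ),
        (∀ k ∈ Finset.Icc 1 K, 0 ≤ q k ∧ (Pi k = 0 → q k = 0)) ∧
        (∀ k ∈ Finset.Icc 1 K, ∀ n ∈ Finset.Icc 0 N, 0 ≤ p k n) ∧
        (∑ k ∈ Finset.Icc 1 K, q k ≤ (K : ℝ) * Q) ∧
        (∀ i ∈ Finset.Icc 1 K,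
          ∑ k ∈ Finset.Icc 1 i, ∑ n ∈ Finset.Icc 0 N, p k n ≤
            ζ * ∑ k ∈ Finset.Icc 1 (i - 1), h k (Pi k) * q k + B1) ∧
        r = (1 / ((K : ℝ) * N)) * ∑ k ∈ Finset.Icc 1 K, ∑ n ∈ Finset.Icc 0 N,
              Real.logb 2 (1 + g k n * p k n / Γσ)} := by
  have hsub : Icc 1 (K - 1) ⊆ Icc 1 K := Icc_subset_Icc_right (Nat.sub_le K 1)
  have hDT_sub : ∀ k ∈ DT, k ∈ Icc 1 (K - 1) := fun k hk => ((hDT k).1 hk).1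
  have hPi_mem : ∀ k ∈ DT, Pi k ∈ Icc 1 N := fun k hk =>
    (hPiDef k).1 hk ▸ (hPiT k (hsub (hDT_sub k hk))).1
  have hPi_le : ∀ k, Pi k ≤ N := fun k => (em (k ∈ DT)).elim
    (fun hk => (mem_Icc.1 (hPi_mem k hk)).2) fun hk => (hPiDef k).2 hk ▸ N.zero_le
  have hgain : ∀ k ∈ Icc 1 K, ∀ n ∈ Icc 0 N, 0 ≤ h k n ∧ h k n ≤ h k (PiT k) := fun k hk =>
    nonneg_and_le_best_channel (hPiT k hk).1 (fun n hn => (hpos k hk n hn).1) (hzero k).1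
      (hPiT k hk).2
  obtain ⟨m, hm⟩ := exists_dominating_record (f := fun k => h k (PiT k))
    (fun a ha b hb hab => by_contra fun hne => hdistT a (hsub ha) b (hsub hb) hne hab) hDT
  congr 1; ext r
  constructor
  · rintro ⟨q, p, hqp, -, hbud, hcaus, rfl⟩
    obtain ⟨q', hq', hbud', hcaus'⟩ := exists_record_charging_of_channel_charging
      (w := fun k => h k (Pi k)) hζ.le (fun k hk => hsub (hDT_sub k hk))
      (fun j hj => (hpos j (hsub (hDT_sub j hj)) _ (hPi_mem j hj)).1)
      (fun k hk => ⟨(hm k hk).1, (hm k hk).2.1, fun n hn => (hPiDef _).1 (hm k hk).1 ▸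
        (hgain k (hsub hk) n hn).2.trans (hm k hk).2.2⟩)
      (fun k hk n hn => (hgain k hk n hn).1) (fun k hk n hn => (hqp k hk n hn).1) hbud hcaus
    refine ⟨q', p, fun k _ => ⟨(hq' k).1, fun h0 => (hq' k).2 fun hkD => ?_⟩,
      fun k hk n hn => (hqp k hk n hn).2, hbud', hcaus', rfl⟩
    have := mem_Icc.1 (hPi_mem k hkD); omega
  · rintro ⟨q, p, hq, hp, hbud, hcaus, rfl⟩
    have hPiK : Pi K = 0 := (hPiDef K).2 fun hKD => by have := mem_Icc.1 (hDT_sub K hKD); omega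
    obtain ⟨hq', hqK, hbud', hcaus'⟩ :=
      channel_charging_singleChannel (by omega) hPi_le hPiK hq hbud hcaus
    exact ⟨singleChannel Pi q, p, fun k hk n hn => ⟨hq' k hk n, hp k hk n hn⟩, hqK, hbud', hcaus',
      rfl⟩

theorem stmt9
    (K N : ℕ) (hK : 2 ≤ K) (hN : 2 ≤ N)
    (h g : ℕ → ℕ → ℝ)
    (hpos : ∀ k ∈ Finset.Icc 1 K, ∀ n ∈ Finset.Icc 1 N, 0 < h k n ∧ 0 < g k n)
    (hzero : ∀ k, h k 0 = 0 ∧ g k 0 = 0)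
    (Q ζ B1 Γσ : ℝ) (hQ : 0 < Q) (hζ : 0 < ζ) (hB1 : 0 ≤ B1) (hΓσ : 0 < Γσ)
    (PiT : ℕ → ℕ)
    (hPiT : ∀ k ∈ Finset.Icc 1 K, PiT k ∈ Finset.Icc 1 N ∧
      ∀ n ∈ Finset.Icc 1 N, n ≠ PiT k → h k n < h k (PiT k))
    (hdistT : ∀ k ∈ Finset.Icc 1 K, ∀ k' ∈ Finset.Icc 1 K, k ≠ k' →
      h k (PiT k) ≠ h k' (PiT k'))
    (DT : Finset ℕ)
    (hDT : ∀ k, k ∈ DT ↔ (k ∈ Finset.Icc 1 (K - 1) ∧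
      ∀ j, 1 ≤ j → j < k → h j (PiT j) < h k (PiT k)))
    (Pi : ℕ → ℕ)
    (hPiDef : ∀ k, (k ∈ DT → Pi k = PiT k) ∧ (k ∉ DT → Pi k = 0)) :
    sSup {r : ℝ | ∃ q p : ℕ → ℕ → ℝ,
        (∀ k ∈ Finset.Icc 1 K, ∀ n ∈ Finset.Icc 0 N, 0 ≤ q k n ∧ 0 ≤ p k n) ∧
        (∀ n, q K n = 0) ∧
        (∑ k ∈ Finset.Icc 1 K, ∑ n ∈ Finset.Icc 0 N, q k n ≤ (K : ℝ) * Q) ∧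
        (∀ i ∈ Finset.Icc 1 K,
          ∑ k ∈ Finset.Icc 1 i, ∑ n ∈ Finset.Icc 0 N, p k n ≤
            ζ * ∑ k ∈ Finset.Icc 1 (i - 1), ∑ n ∈ Finset.Icc 0 N, h k n * q k n + B1) ∧
        r = (1 / ((K : ℝ) * N)) * ∑ k ∈ Finset.Icc 1 K, ∑ n ∈ Finset.Icc 0 N,
              Real.logb 2 (1 + g k n * p k n / Γσ)}
    = sSup {r : ℝ | ∃ (q : ℕ → ℝ) (p : ℕ → ℕ → ℝ),
        (∀ k ∈ Finset.Icc 1 K, 0 ≤ q k ∧ (Pi k = 0 → q k = 0)) ∧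
        (∀ k ∈ Finset.Icc 1 K, ∀ n ∈ Finset.Icc 0 N, 0 ≤ p k n) ∧
        (∑ k ∈ Finset.Icc 1 K, q k ≤ (K : ℝ) * Q) ∧
        (∀ i ∈ Finset.Icc 1 K,
          ∑ k ∈ Finset.Icc 1 i, ∑ n ∈ Finset.Icc 0 N, p k n ≤
            ζ * ∑ k ∈ Finset.Icc 1 (i - 1), h k (Pi k) * q k + B1) ∧
        r = (1 / ((K : ℝ) * N)) * ∑ k ∈ Finset.Icc 1 K, ∑ n ∈ Finset.Icc 0 N,
              Real.logb 2 (1 + g k n * p k n / Γσ)} :=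
  stmt9_general K N hK h g hpos hzero Q ζ B1 Γσ hζ PiT hPiT hdistT DT hDT Pi hPiDef
end

section
/- Under the cutoff stopping rule with cutoff f ∈ {1,…,L}, the probability that the stopped value X_s is the maximum of X_1,…,X_L equals 1/L if f = 1, and equals ((f−1)/L)·∑_{l=f}^{L} 1/(l−1) if 1 < f ≤ L. -/
/-!
Let `M` index the largest value and let `p = σ⁻¹ M` be the position at which it is observed. The
rule wins exactly when it stops at `p`. For `f = 1` this means `p = 0`. For `f ≥ 2` it means
`p ≥ f - 1` and that no record occurs at the positions `f - 1, …, p - 1`, i.e. that the best value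
seen before `p` appears at a position `< f - 1`. Among the permutations with `σ p = M`, composing
with a transposition of two positions before `p` moves that prefix maximum along, so its position
is equidistributed over the `p` earlier positions. Position `p` therefore contributes
`(L - 1)! (f - 1) / p` winning permutations, and summing over `p ≥ f - 1` gives the formula.
-/

noncomputable section

/-- The index (0-based) at which the cutoff rule with cutoff `f` stops, given the
observed sequence `y`: the least index `k` with 1-based position `k + 1 ≥ f` whose
value strictly exceeds all earlier values; if there is none, the last index. -/
def stopIdx (L f : ℕ) (hL : 0 < L) (y : Fin L → ℝ) : Fin L :=
  letI : DecidablePred fun k : Fin L =>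
      f ≤ (k : ℕ) + 1 ∧ ∀ j : Fin L, j < k → y j < y k := Classical.decPred _
  let S : Finset (Fin L) :=
    Finset.univ.filter fun k => f ≤ (k : ℕ) + 1 ∧ ∀ j : Fin L, j < k → y j < y k
  if hS : S.Nonempty then S.min' hS else ⟨L - 1, Nat.sub_lt hL Nat.one_pos⟩

end

open Finset Equiv
open scoped Nat

section PrefixArgmax

variable {β : Type*} [LinearOrder β] {L : ℕ}

def IsRecord (y : Fin L → β) (k : Fin L) : Prop :=
  ∀ j, j < k → y j < y k

/-- Junk value `p` when `p = 0`. -/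
noncomputable def prefixArgmax (y : Fin L → β) (p : Fin L) : Fin L :=
  if h : (Iio p).Nonempty then ((Iio p).exists_max_image y h).choose else p

theorem prefixArgmax_spec (y : Fin L → β) {p : Fin L} (h : (Iio p).Nonempty) :
    prefixArgmax y p < p ∧ ∀ k < p, y k ≤ y (prefixArgmax y p) := by
  rw [prefixArgmax, dif_pos h]
  obtain ⟨hmem, hmax⟩ := ((Iio p).exists_max_image y h).choose_spec
  exact ⟨mem_Iio.1 hmem, fun k hk => hmax k (mem_Iio.2 hk)⟩

theorem prefixArgmax_eq {y : Fin L → β} (hy : Function.Injective y) {p q : Fin L} (hq : q < p)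
    (hmax : ∀ k < p, y k ≤ y q) : prefixArgmax y p = q := by
  obtain ⟨hlt, hle⟩ := prefixArgmax_spec y ⟨q, mem_Iio.2 hq⟩
  exact hy (le_antisymm (hmax _ hlt) (hle q hq))

theorem prefixArgmax_comp_swap {y : Fin L → β} (hy : Function.Injective y) {p a b : Fin L}
    (ha : a < p) (hb : b < p) :
    prefixArgmax (y ∘ swap a b) p = swap a b (prefixArgmax y p) := by
  have hswap : ∀ k < p, swap a b k < p := fun k hk => by
    rw [swap_apply_def]; split_ifs <;> assumption
  obtain ⟨hlt, hmax⟩ := prefixArgmax_spec y ⟨a, mem_Iio.2 ha⟩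
  refine prefixArgmax_eq (hy.comp (swap a b).injective) (hswap _ hlt) fun k hk => ?_
  simpa using hmax _ (hswap k hk)

theorem forall_not_isRecord_iff_prefixArgmax_lt {y : Fin L → β} (hy : Function.Injective y)
    {p : Fin L} {f : ℕ} (hf : 2 ≤ f) (hfp : f ≤ p + 1) :
    (∀ k : Fin L, f ≤ k + 1 → k < p → ¬ IsRecord y k) ↔ (prefixArgmax y p : ℕ) < f - 1 := by
  obtain ⟨hlt, hmax⟩ :=
    prefixArgmax_spec y ⟨⟨0, p.pos⟩, mem_Iio.2 (Fin.lt_def.2 (by show 0 < (p : ℕ); omega))⟩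
  constructor
  · intro h
    by_contra hge
    exact h _ (by omega) hlt fun j hj => (hmax j (hj.trans hlt)).lt_of_ne (hy.ne hj.ne)
  · intro h k hk hkp hrec
    exact (hmax k hkp).not_gt (hrec _ (Fin.lt_def.2 (by omega)))

end PrefixArgmax

section Stopping

variable {L : ℕ}

theorem forall_le_apply_iff_eq {β : Type*} [LinearOrder β] {y : Fin L → β} {p : Fin L}
    (hp : ∀ j ≠ p, y j < y p) (s : Fin L) : (∀ j, y j ≤ y s) ↔ s = p := by
  constructor
  · intro h
    by_contra hs
    exact (hp s hs).not_ge (h p)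
  · rintro rfl j
    rcases eq_or_ne j s with rfl | hj
    exacts [le_rfl, (hp j hj).le]

theorem stopIdx_one (hL : 0 < L) (y : Fin L → ℝ) : stopIdx L 1 hL y = ⟨0, hL⟩ := by
  unfold stopIdx
  dsimp only
  have h0 : IsRecord y ⟨0, hL⟩ := fun j hj => (Nat.not_lt_zero _ (Fin.lt_def.1 hj)).elim
  split_ifs with hS
  · rw [min'_eq_iff]
    exact ⟨by simpa [IsRecord] using h0, fun _ _ => Fin.le_def.2 (Nat.zero_le _)⟩
  · exact (hS ⟨⟨0, hL⟩, by simpa [IsRecord] using h0⟩).elim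

theorem stopIdx_eq_iff {f : ℕ} (hL : 0 < L) (hfL : f ≤ L) {y : Fin L → ℝ} {p : Fin L}
    (hp : ∀ j ≠ p, y j < y p) :
    stopIdx L f hL y = p ↔
      f ≤ (p : ℕ) + 1 ∧ ∀ k : Fin L, f ≤ (k : ℕ) + 1 → k < p → ¬ IsRecord y k := by
  have hrec : IsRecord y p := fun j hj => hp j hj.ne
  unfold stopIdx
  dsimp only
  split_ifs with hS
  · simp only [min'_eq_iff, mem_filter, mem_univ, true_and]
    refine and_congr ⟨fun h => h.1, fun h => ⟨h, hrec⟩⟩ ⟨fun h k hk hkp hk' => ?_, fun h k hk => ?_⟩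
    · exact (h k ⟨hk, hk'⟩).not_gt hkp
    · exact not_lt.1 fun hkp => h k hk.1 hkp hk.2
  · simp only [not_nonempty_iff_eq_empty, filter_eq_empty_iff, mem_univ, true_implies,
      not_and] at hS
    constructor
    · rintro rfl
      exact (hS (x := ⟨L - 1, _⟩) (by simp only; omega) hrec).elim
    · exact fun h => (hS h.1 hrec).elim

theorem forall_le_stopIdx_one_iff (hL : 0 < L) {y : Fin L → ℝ} {p : Fin L}
    (hp : ∀ j ≠ p, y j < y p) : (∀ j, y j ≤ y (stopIdx L 1 hL y)) ↔ p = ⟨0, hL⟩ := by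
  rw [forall_le_apply_iff_eq hp, stopIdx_one, eq_comm]

theorem forall_le_stopIdx_iff {f : ℕ} (hL : 0 < L) (hf : 2 ≤ f) (hfL : f ≤ L) {y : Fin L → ℝ}
    (hy : Function.Injective y) {p : Fin L} (hp : ∀ j ≠ p, y j < y p) :
    (∀ j, y j ≤ y (stopIdx L f hL y)) ↔ f ≤ (p : ℕ) + 1 ∧ (prefixArgmax y p : ℕ) < f - 1 := by
  rw [forall_le_apply_iff_eq hp, stopIdx_eq_iff hL hfL hp]
  exact and_congr_right fun h => forall_not_isRecord_iff_prefixArgmax_lt hy hf h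

end Stopping

section SwapCounting

theorem card_filter_mul_card_eq_of_card_fibers_eq {γ δ : Type*} [DecidableEq δ]
    {s : Finset γ} {t u : Finset δ} {g : γ → δ} (hst : ∀ c ∈ s, g c ∈ t)
    (hfib : ∀ a ∈ t, ∀ b ∈ t, #{c ∈ s | g c = a} = #{c ∈ s | g c = b}) (hut : u ⊆ t) :
    #{c ∈ s | g c ∈ u} * #t = #u * #s := by
  rcases t.eq_empty_or_nonempty with rfl | ⟨b₀, hb₀⟩
  · simp [subset_empty.1 hut]
  have hcount : ∀ v ⊆ t, #{c ∈ s | g c ∈ v} = #v * #{c ∈ s | g c = b₀} := by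
    intro v hvt
    rw [card_eq_sum_card_fiberwise (s := {c ∈ s | g c ∈ v}) (t := v) fun c hc =>
      (mem_filter.1 (mem_coe.1 hc)).2]
    refine sum_const_nat fun b hb => ?_
    rw [filter_filter, ← hfib b (hvt hb) b₀ hb₀]
    congr 1
    exact filter_congr fun c _ => ⟨fun h => h.2, fun h => ⟨h ▸ hb, h⟩⟩
  have hs : #s = #t * #{c ∈ s | g c = b₀} := by
    rw [← hcount t subset_rfl, filter_true_of_mem hst]
  rw [hcount u hut, hs, mul_right_comm, mul_assoc]

variable {α : Type*} [DecidableEq α]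

theorem card_filter_eq_of_mul_swap {s : Finset (Perm α)} {t : Set α} {g : Perm α → α}
    (hs : ∀ σ ∈ s, ∀ a ∈ t, ∀ b ∈ t, σ * swap a b ∈ s)
    (hg : ∀ σ ∈ s, ∀ a ∈ t, ∀ b ∈ t, g (σ * swap a b) = swap a b (g σ))
    {a b : α} (ha : a ∈ t) (hb : b ∈ t) :
    #{σ ∈ s | g σ = a} = #{σ ∈ s | g σ = b} := by
  have hinv : ∀ σ : Perm α, σ * swap a b * swap a b = σ := fun σ => by
    rw [mul_assoc, swap_mul_self, mul_one]
  refine card_bij' (fun σ _ => σ * swap a b) (fun σ _ => σ * swap a b) (fun σ hσ => ?_)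
    (fun σ hσ => ?_) (fun σ _ => hinv σ) (fun σ _ => hinv σ) <;>
  · rw [mem_filter] at hσ ⊢
    refine ⟨hs σ hσ.1 a ha b hb, ?_⟩
    rw [hg σ hσ.1 a ha b hb, hσ.2]
    simp

theorem card_filter_symm_apply_eq_div_factorial [Fintype α] (m a : α) :
    (#{σ : Perm α | σ.symm m = a} : ℝ) / (Fintype.card α)! = 1 / Fintype.card α := by
  have h := card_filter_mul_card_eq_of_card_fibers_eq (s := univ) (t := univ) (u := {a})
    (g := fun σ : Perm α => σ.symm m) (fun _ _ => mem_univ _)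
    (fun a _ b _ => card_filter_eq_of_mul_swap (t := Set.univ) (fun _ _ _ _ _ _ => mem_univ _)
      (fun σ _ a _ b _ => by simp [Perm.mul_def]) trivial trivial) (subset_univ _)
  simp only [mem_singleton, card_singleton, one_mul] at h
  rw [Finset.card_univ, Finset.card_univ, Fintype.card_perm] at h
  have hC : #{σ : Perm α | σ.symm m = a} ≠ 0 := left_ne_zero_of_mul (h ▸ Nat.factorial_ne_zero _)
  rw [← h, Nat.cast_mul]
  field_simp

end SwapCounting

theorem sum_filter_le_val_add_one_eq_sum_Icc {M : Type*} [AddCommMonoid M] {L f : ℕ} (hf : 1 ≤ f)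
    (g : ℕ → M) : ∑ p ∈ ({p : Fin L | f ≤ (p : ℕ) + 1} : Finset (Fin L)), g (p + 1) =
      ∑ l ∈ Icc f L, g l := by
  refine sum_bij' (fun p _ => p + 1) (fun l hl => ⟨l - 1, by grind⟩)
    (fun p hp => ?_) (fun l hl => ?_) (fun p _ => ?_) (fun l hl => ?_) (fun _ _ => rfl)
  · simp only [mem_filter, mem_univ, true_and, mem_Icc] at hp ⊢
    omega
  · simp only [mem_filter, mem_univ, true_and, mem_Icc] at hl ⊢
    omega
  · simp
  · simp only [mem_Icc] at hl
    simp only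
    omega

section PrefixArgmaxCounting

variable {β : Type*} [LinearOrder β] {L : ℕ} {x : Fin L → β}

theorem card_filter_prefixArgmax_lt_mul (hx : Function.Injective x) (m p : Fin L) {k : ℕ}
    (hk₀ : 0 < k) (hkp : k ≤ p) :
    #{σ : Perm (Fin L) | σ.symm m = p ∧ (prefixArgmax (x ∘ σ) p : ℕ) < k} * p =
      k * #{σ : Perm (Fin L) | σ.symm m = p} := by
  have hne : (Iio p).Nonempty :=
    ⟨⟨0, p.pos⟩, mem_Iio.2 (Fin.lt_def.2 (by show 0 < (p : ℕ); omega))⟩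
  have hswap : ∀ σ ∈ ({σ : Perm (Fin L) | σ.symm m = p} : Finset _), ∀ a ∈ (Iio p : Set _),
      ∀ b ∈ (Iio p : Set _), σ * swap a b ∈ ({σ : Perm (Fin L) | σ.symm m = p} : Finset _) := by
    intro σ hσ a ha b hb
    simp only [mem_filter, mem_univ, true_and, coe_Iio, Set.mem_Iio] at hσ ha hb ⊢
    rw [Perm.mul_def, symm_trans_apply, symm_swap, hσ, swap_apply_of_ne_of_ne ha.ne' hb.ne']
  have h := card_filter_mul_card_eq_of_card_fibers_eq (t := Iio p) (u := Iio ⟨k, by omega⟩)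
    (g := fun σ : Perm (Fin L) => prefixArgmax (x ∘ σ) p)
    (fun σ _ => mem_Iio.2 (prefixArgmax_spec _ hne).1)
    (fun a ha b hb => card_filter_eq_of_mul_swap hswap
      (fun σ _ a ha b hb => prefixArgmax_comp_swap (hx.comp σ.injective)
        (mem_Iio.1 ha) (mem_Iio.1 hb)) ha hb)
    (Iio_subset_Iio (Fin.le_def.2 hkp))
  rw [filter_filter, Fin.card_Iio, Fin.card_Iio] at h
  simpa [Fin.lt_def] using h

theorem card_filter_prefixArgmax_lt_div_factorial (hx : Function.Injective x) (m p : Fin L)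
    {k : ℕ} (hk₀ : 0 < k) (hkp : k ≤ p) :
    (#{σ : Perm (Fin L) | σ.symm m = p ∧ (prefixArgmax (x ∘ σ) p : ℕ) < k} : ℝ) / L ! =
      k / (L * p) := by
  have hmul : (#{σ : Perm (Fin L) | σ.symm m = p ∧ (prefixArgmax (x ∘ σ) p : ℕ) < k} : ℝ) * p =
      k * #{σ : Perm (Fin L) | σ.symm m = p} := by
    exact_mod_cast card_filter_prefixArgmax_lt_mul hx m p hk₀ hkp
  have hp : (p : ℝ) ≠ 0 := by norm_cast; omega
  calc (#{σ : Perm (Fin L) | σ.symm m = p ∧ (prefixArgmax (x ∘ σ) p : ℕ) < k} : ℝ) / L !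
      = k / p * (#{σ : Perm (Fin L) | σ.symm m = p} / L !) := by
        field_simp
        linear_combination hmul
    _ = k / (L * p) := by
        have := card_filter_symm_apply_eq_div_factorial m p
        rw [Fintype.card_fin] at this
        rw [this]; field_simp

theorem card_filter_prefixArgmax_lt_div_factorial_eq_sum (hx : Function.Injective x) (M : Fin L)
    {f : ℕ} (hf : 2 ≤ f) :
    (#{σ : Perm (Fin L) | f ≤ (σ.symm M : ℕ) + 1 ∧
        (prefixArgmax (x ∘ σ) (σ.symm M) : ℕ) < f - 1} : ℝ) / L ! =
      ((f : ℝ) - 1) / L * ∑ l ∈ Icc f L, 1 / ((l : ℝ) - 1) := by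
  rw [card_eq_sum_card_fiberwise (f := fun σ : Perm (Fin L) => σ.symm M)
    (t := {p : Fin L | f ≤ (p : ℕ) + 1}) fun σ hσ => by simp_all, Nat.cast_sum, sum_div,
    ← sum_filter_le_val_add_one_eq_sum_Icc (by omega), mul_sum]
  refine sum_congr rfl fun p hp => ?_
  have hfp : f ≤ (p : ℕ) + 1 := by simpa using hp
  rw [filter_filter, filter_congr (q := fun σ : Perm (Fin L) =>
      σ.symm M = p ∧ (prefixArgmax (x ∘ σ) p : ℕ) < f - 1) fun σ _ => by
        constructor
        · rintro ⟨⟨-, h⟩, rfl⟩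
          exact ⟨rfl, h⟩
        · rintro ⟨rfl, h⟩
          exact ⟨⟨hfp, h⟩, rfl⟩,
    card_filter_prefixArgmax_lt_div_factorial hx M p (by omega) (by omega)]
  push_cast [Nat.cast_sub (by omega : 1 ≤ f)]
  ring

end PrefixArgmaxCounting

open Classical in
theorem stmt12 (L : ℕ) (hL : 1 ≤ L) (x : Fin L → ℝ) (hx : Function.Injective x)
    (f : ℕ) (hf1 : 1 ≤ f) (hfL : f ≤ L) :
    (((Finset.univ : Finset (Equiv.Perm (Fin L))).filter
        (fun σ => ∀ j : Fin L,
          x (σ j) ≤ x (σ (stopIdx L f (by omega) (fun k => x (σ k)))))).card : ℝ)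
      / (Nat.factorial L : ℝ)
    = if f = 1 then 1 / (L : ℝ)
      else (((f : ℝ) - 1) / (L : ℝ)) * ∑ l ∈ Finset.Icc f L, 1 / ((l : ℝ) - 1) := by
  have : Nonempty (Fin L) := ⟨⟨0, hL⟩⟩
  obtain ⟨M, -, hM⟩ := exists_max_image univ x univ_nonempty
  have hmax (σ : Perm (Fin L)) : ∀ j ≠ σ.symm M, x (σ j) < x (σ (σ.symm M)) := fun j hj => by
    rw [apply_symm_apply]
    exact (hM _ (mem_univ _)).lt_of_ne (hx.ne fun h => hj ((eq_symm_apply σ).2 h))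
  split_ifs with hf
  · subst hf
    rw [filter_congr fun σ _ => forall_le_stopIdx_one_iff hL (hmax σ)]
    simpa using card_filter_symm_apply_eq_div_factorial M (⟨0, hL⟩ : Fin L)
  · rw [filter_congr fun σ _ =>
      forall_le_stopIdx_iff _ (by omega) hfL (fun _ _ h => σ.injective (hx h)) (hmax σ)]
    exact card_filter_prefixArgmax_lt_div_factorial_eq_sum hx M (by omega)
end
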